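/- arXiv:2111.05114 — 6 statements merged into one kernel-verified Lean document; each statement's English description precedes it below -/
import Mathlib

section
/- Let T be a static attack tree, i.e., a finite rooted DAG where each leaf is labeled BAS and each internal node is labeled OR or AND, with durations d : BAS → ℝ≥0. Define the bottom-up value BU(v) recursively: BU(a) = d(a) for a BAS a, BU(v) = min over children v' of BU(v') if v is an OR node, and BU(v) = max over children v' of BU(v') if v is an AND node. Define the semantics: a set A of BASes reaches a BAS a iff a ∈ A; reaches an OR node iff it reaches some child; reaches an AND node iff it reaches all children. Then BU(root) = min over all A ⊆ BAS that reach the root of (max over a ∈ A of d(a)). -/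
open scoped ENNReal

/-- A dynamic attack tree: leaves are basic attack steps (BAS), internal
nodes are OR / AND / SAND gates with a list of children (ordered, which
matters for SAND).  DAG-sharing is modelled by shared BAS labels /
shared subterms. -/
inductive DAT (α : Type) : Type
  | bas (a : α) : DAT α
  | or (cs : List (DAT α)) : DAT α
  | and (cs : List (DAT α)) : DAT α
  | sand (cs : List (DAT α)) : DAT α

namespace DAT

variable {α : Type}

/-- `IsBasDesc v a` : the BAS `a` is a descendant of node `v` (i.e. `a ∈ B_v`). -/
inductive IsBasDesc : DAT α → α → Prop
  | bas (a : α) : IsBasDesc (.bas a) a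
  | or {cs : List (DAT α)} {c : DAT α} {a : α} : c ∈ cs → IsBasDesc c a → IsBasDesc (.or cs) a
  | and {cs : List (DAT α)} {c : DAT α} {a : α} : c ∈ cs → IsBasDesc c a → IsBasDesc (.and cs) a
  | sand {cs : List (DAT α)} {c : DAT α} {a : α} : c ∈ cs → IsBasDesc c a → IsBasDesc (.sand cs) a

/-- `Subnode v T` : `v` is a node of the DAT `T` (a subterm). -/
inductive Subnode : DAT α → DAT α → Prop
  | refl (t : DAT α) : Subnode t t
  | or {v c : DAT α} {cs : List (DAT α)} : c ∈ cs → Subnode v c → Subnode v (.or cs)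
  | and {v c : DAT α} {cs : List (DAT α)} : c ∈ cs → Subnode v c → Subnode v (.and cs)
  | sand {v c : DAT α} {cs : List (DAT α)} : c ∈ cs → Subnode v c → Subnode v (.sand cs)

/-- `Reaches A r v` : the attack given by the set `A` of activated BASes and
the strict order `r` on them reaches node `v`. -/
inductive Reaches (A : Set α) (r : α → α → Prop) : DAT α → Prop
  | bas {a : α} : a ∈ A → Reaches A r (.bas a)
  | or {cs : List (DAT α)} {c : DAT α} : c ∈ cs → Reaches A r c → Reaches A r (.or cs)
  | and {cs : List (DAT α)} : (∀ c ∈ cs, Reaches A r c) → Reaches A r (.and cs)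
  | sand {cs : List (DAT α)} :
      (∀ c ∈ cs, Reaches A r c) →
      (∀ i, (h : i + 1 < cs.length) → ∀ a a', a ∈ A → a' ∈ A →
        IsBasDesc (cs.get ⟨i, Nat.lt_of_succ_lt h⟩) a →
        IsBasDesc (cs.get ⟨i + 1, h⟩) a' → r a a') →
      Reaches A r (.sand cs)

end DAT

/-- An attack: a finite set of BASes together with a strict partial order on it. -/
structure Attack (α : Type) where
  carrier : Finset α
  lt : α → α → Prop
  lt_mem : ∀ {a b : α}, lt a b → a ∈ carrier ∧ b ∈ carrier
  lt_irrefl : ∀ a, ¬ lt a a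
  lt_trans : ∀ {a b c : α}, lt a b → lt b c → lt a c

namespace Attack

variable {α : Type}

/-- The order on attacks: inclusion of carriers and of order relations. -/
def le (O O' : Attack α) : Prop :=
  O.carrier ⊆ O'.carrier ∧ ∀ a b, O.lt a b → O'.lt a b

end Attack

namespace DAT

variable {α : Type}

/-- A maximal chain of the strict poset with carrier `A` and order `r`. -/
def MaxChain (A : Set α) (r : α → α → Prop) (C : Finset α) : Prop :=
  ↑C ⊆ A ∧ IsChain r ↑C ∧
    ∀ C' : Finset α, ↑C' ⊆ A → IsChain r ↑C' → C ⊆ C' → C' = C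

/-- Duration `t(O, d)` of an attack: the maximum over maximal chains of the
sum of the durations. -/
noncomputable def dur (A : Set α) (r : α → α → Prop) (d : α → ℝ≥0∞) : ℝ≥0∞ :=
  ⨆ C ∈ {C : Finset α | MaxChain A r C}, ∑ a ∈ C, d a

/-- An attack is successful on `T` if it reaches the root of `T`. -/
def Successful (O : Attack α) (T : DAT α) : Prop :=
  Reaches (↑O.carrier) O.lt T

/-- Min time: the infimum of the durations of successful attacks (`∞` if there
are none). -/
noncomputable def mt (T : DAT α) (d : α → ℝ≥0∞) : ℝ≥0∞ :=
  ⨅ O ∈ {O : Attack α | Successful O T}, dur (↑O.carrier) O.lt d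

end DAT

namespace DAT

variable {α : Type}

/-- The bottom-up algorithm MT-BU. -/
noncomputable def BU (d : α → ℝ≥0∞) : DAT α → ℝ≥0∞
  | .bas a => d a
  | .or cs => (cs.attach.map (fun c => BU d c.1)).foldr min ⊤
  | .and cs => (cs.attach.map (fun c => BU d c.1)).foldr max 0
  | .sand cs => (cs.attach.map (fun c => BU d c.1)).sum
  decreasing_by all_goals (simp_wf; have := List.sizeOf_lt_of_mem c.2; omega)

/-- A static attack tree: no SAND gates. -/
inductive IsStatic : DAT α → Prop
  | bas (a : α) : IsStatic (.bas a)
  | or {cs : List (DAT α)} : (∀ c ∈ cs, IsStatic c) → IsStatic (.or cs)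
  | and {cs : List (DAT α)} : (∀ c ∈ cs, IsStatic c) → IsStatic (.and cs)

/-- Reachability for a plain set of BASes (static semantics, no order needed). -/
inductive ReachSet (A : Set α) : DAT α → Prop
  | bas {a : α} : a ∈ A → ReachSet A (.bas a)
  | or {cs : List (DAT α)} {c : DAT α} : c ∈ cs → ReachSet A c → ReachSet A (.or cs)
  | and {cs : List (DAT α)} : (∀ c ∈ cs, ReachSet A c) → ReachSet A (.and cs)

/-- List of the BAS labels occurring in a DAT, with multiplicity. -/
def basList : DAT α → List α
  | .bas a => [a]
  | .or cs => (cs.attach.map (fun c => basList c.1)).flatten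
  | .and cs => (cs.attach.map (fun c => basList c.1)).flatten
  | .sand cs => (cs.attach.map (fun c => basList c.1)).flatten
  decreasing_by all_goals (simp_wf; have := List.sizeOf_lt_of_mem c.2; omega)

/-- The "bad" condition forcing a SAND node to `∞`: some child is not reached,
or some pair of BASes of consecutive children violates the ordering constraint. -/
def SandBad (d : α → ℝ≥0∞) (f : DAT α → ℝ≥0∞) (cs : List (DAT α)) : Prop :=
  (∃ c ∈ cs, f c = ⊤) ∨
    ∃ i, ∃ h : i + 1 < cs.length, ∃ a a',
      IsBasDesc (cs.get ⟨i, Nat.lt_of_succ_lt h⟩) a ∧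
      IsBasDesc (cs.get ⟨i + 1, h⟩) a' ∧
      f (.bas a') - d a' < f (.bas a) ∧ f (.bas a) < ⊤

/-- Local time-assignment constraints at a node. -/
def LocalTA (d : α → ℝ≥0∞) (f : DAT α → ℝ≥0∞) : DAT α → Prop
  | .bas a => d a ≤ f (.bas a)
  | .or cs => (⨅ c ∈ cs, f c) ≤ f (.or cs)
  | .and cs => (⨆ c ∈ cs, f c) ≤ f (.and cs)
  | .sand cs =>
      (∀ c, cs.getLast? = some c → f c ≤ f (.sand cs)) ∧
      (SandBad d f cs → f (.sand cs) = ⊤)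

/-- Local exact time-assignment constraints at a node. -/
def LocalExact (d : α → ℝ≥0∞) (f : DAT α → ℝ≥0∞) : DAT α → Prop
  | .bas a => d a ≤ f (.bas a)
  | .or cs => f (.or cs) = ⨅ c ∈ cs, f c
  | .and cs => f (.and cs) = ⨆ c ∈ cs, f c
  | .sand cs =>
      (SandBad d f cs → f (.sand cs) = ⊤) ∧
      (¬ SandBad d f cs → ∀ c, cs.getLast? = some c → f (.sand cs) = f c)

/-- `f` is a time assignment for `T`. -/
def IsTA (d : α → ℝ≥0∞) (f : DAT α → ℝ≥0∞) (T : DAT α) : Prop :=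
  ∀ v, Subnode v T → LocalTA d f v

/-- `f` is an exact time assignment for `T`. -/
def IsExactTA (d : α → ℝ≥0∞) (f : DAT α → ℝ≥0∞) (T : DAT α) : Prop :=
  ∀ v, Subnode v T → LocalExact d f v

end DAT

/-!
Both inequalities go by induction on the tree. A set `A` reaching a node has
`max_{a ∈ A} d a ≥ BU` there: an OR node is reached through one child, whose `BU` bounds the
minimum, and an AND node through all of them. Conversely, whenever `BU v < ⊤` there is a set
reaching `v` of cost at most `BU v`: at an OR node take the witness of a child attaining the
minimum, at an AND node the union of the witnesses of all children, whose cost is the maximum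
of theirs. Sharing of subtrees is harmless because costs are maxima, which do not count
repeated steps twice.
-/

theorem List.foldr_min_mem {β : Type*} [LinearOrder β] [OrderTop β] {l : List β} (hl : l ≠ []) :
    l.foldr min ⊤ ∈ l :=
  List.minimum_mem (List.foldr_min_of_ne_nil hl).symm

namespace DAT

variable {α : Type}

theorem ReachSet.mono {A B : Set α} (h : A ⊆ B) {T : DAT α} (hA : ReachSet A T) :
    ReachSet B T := by
  induction hA with
  | bas ha => exact .bas (h ha)
  | or hc _ ih => exact .or hc ih
  | and _ ih => exact .and ih

section BU

variable (d : α → ℝ≥0∞)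

@[simp]
theorem BU_bas (a : α) : BU d (.bas a) = d a := by
  rw [BU]

@[simp]
theorem BU_or (cs : List (DAT α)) : BU d (.or cs) = (cs.map (BU d)).foldr min ⊤ := by
  rw [BU, List.map_attach_eq_pmap, List.pmap_eq_map]

@[simp]
theorem BU_and (cs : List (DAT α)) : BU d (.and cs) = (cs.map (BU d)).foldr max 0 := by
  rw [BU, List.map_attach_eq_pmap, List.pmap_eq_map]

theorem BU_le_iSup_of_reachSet {A : Finset α} {T : DAT α} (hA : ReachSet (↑A) T) :
    BU d T ≤ ⨆ a ∈ A, d a := by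
  induction hA with
  | bas ha => exact (BU_bas d _).le.trans (le_iSup₂_of_le _ ha le_rfl)
  | or hc _ ih => exact (BU_or d _).le.trans <| (List.min_le_of_le (List.mem_map_of_mem hc) le_rfl).trans ih
  | and _ ih =>
    rw [BU_and]
    refine List.max_le_of_forall_le _ _ fun x hx => ?_
    obtain ⟨c, hc, rfl⟩ := List.mem_map.mp hx
    exact ih c hc

theorem exists_reachSet_iSup_le_BU {T : DAT α} (hT : IsStatic T) (hfin : BU d T ≠ ⊤) :
    ∃ A : Finset α, (↑A : Set α) ⊆ {a | IsBasDesc T a} ∧ ReachSet (↑A) T ∧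
      (⨆ a ∈ A, d a) ≤ BU d T := by
  classical
  induction hT with
  | bas a =>
    refine ⟨{a}, ?_, .bas (Finset.mem_singleton_self a), by simp⟩
    simpa using IsBasDesc.bas a
  | @or cs _ ih =>
    have hcs : cs.map (BU d) ≠ [] := by
      rintro h
      simp [h] at hfin
    obtain ⟨c, hc, hcmin⟩ := List.mem_map.mp (List.foldr_min_mem hcs)
    rw [BU_or, ← hcmin] at hfin ⊢
    obtain ⟨A, hsub, hreach, hle⟩ := ih c hc hfin
    exact ⟨A, fun a ha => .or hc (hsub ha), .or hc hreach, hle⟩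
  | @and cs _ ih =>
    have hchild : ∀ c ∈ cs, BU d c ≤ BU d (.and cs) := fun c hc =>
      (BU_and d cs).ge.trans' (List.le_max_of_le (List.mem_map_of_mem hc) le_rfl)
    have hw : ∀ c ∈ cs, ∃ A : Finset α, (↑A : Set α) ⊆ {a | IsBasDesc c a} ∧
        ReachSet (↑A) c ∧ (⨆ a ∈ A, d a) ≤ BU d c := fun c hc =>
      ih c hc (ne_top_of_le_ne_top hfin (hchild c hc))
    choose! A hsub hreach hle using hw
    refine ⟨cs.toFinset.biUnion A, ?_, ?_, ?_⟩
    · intro a ha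
      obtain ⟨c, hc, hac⟩ := Finset.mem_biUnion.mp ha
      exact .and (List.mem_toFinset.mp hc) (hsub c (List.mem_toFinset.mp hc) hac)
    · refine .and fun c hc => (hreach c hc).mono ?_
      exact_mod_cast Finset.subset_biUnion_of_mem A (List.mem_toFinset.mpr hc)
    · rw [Finset.iSup_biUnion]
      refine iSup₂_le fun c hc => (hle c ?_).trans (hchild c ?_) <;>
        exact List.mem_toFinset.mp hc

end BU

end DAT

theorem stmt3_general {α : Type} (T : DAT α) (hT : DAT.IsStatic T) (d : α → ℝ≥0∞) :
    DAT.BU d T =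
      ⨅ A ∈ {A : Finset α | (↑A : Set α) ⊆ {a | DAT.IsBasDesc T a} ∧
        DAT.ReachSet (↑A) T}, ⨆ a ∈ A, d a := by
  refine le_antisymm (le_iInf₂ fun A hA => DAT.BU_le_iSup_of_reachSet d hA.2) ?_
  by_cases hfin : DAT.BU d T = ⊤
  · simp [hfin]
  · obtain ⟨A, hsub, hreach, hle⟩ := DAT.exists_reachSet_iSup_le_BU d hT hfin
    exact iInf₂_le_of_le A ⟨hsub, hreach⟩ hle

/-- on a (possibly DAG-shaped) static attack tree, the bottom-up
algorithm computes the min time. -/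
theorem stmt3 {α : Type} (T : DAT α) (hT : DAT.IsStatic T) (d : α → ℝ≥0∞)
    (hd : ∀ a, d a ≠ ⊤) :
    DAT.BU d T =
      ⨅ A ∈ {A : Finset α | (↑A : Set α) ⊆ {a | DAT.IsBasDesc T a} ∧
        DAT.ReachSet (↑A) T}, ⨆ a ∈ A, d a :=
  stmt3_general T hT d
end

section
/- Reaching a node in a dynamic attack tree is not monotone in the attack: there exist a DAT T, a node v, and attacks O ≤ O' (i.e., A ⊆ A' and ≺ ⊆ ≺') such that O reaches v but O' does not. Concretely, for T = SAND(OR(a,b), OR(b,c)) (with b shared), the attack ({a,c}, {(a,c)}) is successful but ({a,b,c}, {(a,c)}) is not. -/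
open scoped ENNReal

/-- reachability is not monotone in the attack:
for `T = SAND(OR(a,b), OR(b,c))`, `({a,c},{(a,c)})` is successful but
`({a,b,c},{(a,c)})` is not. -/
theorem stmt6 : ∃ (T : DAT ℕ) (O O' : Attack ℕ),
    T = .sand [.or [.bas 0, .bas 1], .or [.bas 1, .bas 2]] ∧
    O.carrier = {0, 2} ∧ (∀ x y, O.lt x y ↔ x = 0 ∧ y = 2) ∧
    O'.carrier = {0, 1, 2} ∧ (∀ x y, O'.lt x y ↔ x = 0 ∧ y = 2) ∧
    O.le O' ∧ DAT.Successful O T ∧ ¬ DAT.Successful O' T := by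
  refine ⟨.sand [.or [.bas 0, .bas 1], .or [.bas 1, .bas 2]],
    ⟨{0, 2}, fun x y => x = 0 ∧ y = 2, ?_, ?_, ?_⟩,
    ⟨{0, 1, 2}, fun x y => x = 0 ∧ y = 2, ?_, ?_, ?_⟩,
    rfl, rfl, fun x y => Iff.rfl, rfl, fun x y => Iff.rfl, ?_, ?_, ?_⟩
  · rintro a b ⟨rfl, rfl⟩; simp
  · rintro a ⟨h0, h2⟩; omega
  · rintro a b c ⟨rfl, rfl⟩ ⟨h, _⟩; omega
  · rintro a b ⟨rfl, rfl⟩; simp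
  · rintro a ⟨h0, h2⟩; omega
  · rintro a b c ⟨rfl, rfl⟩ ⟨h, _⟩; omega
  · exact ⟨by intro x hx; simp at hx ⊢; omega, fun a b h => h⟩
  · refine DAT.Reaches.sand ?_ ?_
    · intro c hc
      simp only [List.mem_cons, List.mem_singleton] at hc
      rcases hc with rfl | rfl | hc
      · exact .or (c := .bas 0) (by simp) (.bas (by simp))
      · exact .or (c := .bas 2) (by simp) (.bas (by simp))
      · simp at hc
    · intro i h a a' ha ha' hd hd'
      simp only [List.length_cons, List.length_nil] at h
      have hi : i = 0 := by omega
      subst hi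
      simp only [List.get] at hd hd'
      have ha0 : a = 0 := by
        cases hd with
        | or hmem hdc =>
          simp only [List.mem_cons, List.mem_singleton] at hmem
          rcases hmem with rfl | rfl | hmem
          · cases hdc; simp
          · cases hdc; simp at ha
          · simp at hmem
      have ha2 : a' = 2 := by
        cases hd' with
        | or hmem hdc =>
          simp only [List.mem_cons, List.mem_singleton] at hmem
          rcases hmem with rfl | rfl | hmem
          · cases hdc; simp at ha'
          · cases hdc; simp
          · simp at hmem
      exact ⟨ha0, ha2⟩
  · intro hs
    cases hs with
    | sand hall hord =>
      have := hord 0 (by simp) 1 1 (by simp) (by simp)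
        (.or (by simp) (.bas 1)) (.or (by simp) (.bas 1))
      omega
end

section
/- Let T be a dynamic attack tree with durations d. For every time assignment f ∈ F_T (satisfying the defining inequalities at each node) there is an exact time assignment f' (satisfying equality in the OR and AND constraints, and equality in the SAND constraint whenever the infinity-forcing conditions do not hold) such that f'_{R} ≤ f_{R}, where R is the root. Consequently min_{f ∈ F_T} f_R = min_{f ∈ F_{E,T}} f_R. -/
open scoped ENNReal

/-!
Recompute `f` bottom-up: keep its values on the BASes, take the minimum at OR and the maximum at AND
nodes, and at a SAND node take `∞` if the SAND infinity conditions hold and the value of the last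
child otherwise. The result is exact by construction, and lies below `f` by induction: the ordering
condition at a SAND node only reads the unchanged BAS values, and a child that becomes `∞` was
already `∞` under `f`, so whenever the new SAND value is `∞`, so was the old one.
-/

namespace DAT

variable {α : Type}

theorem Subnode.trans {u v w : DAT α} (huv : Subnode u v) (hvw : Subnode v w) : Subnode u w := by
  induction hvw with
  | refl => exact huv
  | or hc _ ih => exact .or hc ih
  | and hc _ ih => exact .and hc ih
  | sand hc _ ih => exact .sand hc ih

theorem IsTA.of_subnode {d : α → ℝ≥0∞} {f : DAT α → ℝ≥0∞} {v T : DAT α} (hf : IsTA d f T)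
    (hv : Subnode v T) : IsTA d f v :=
  fun u hu => hf u (hu.trans hv)

theorem IsExactTA.isTA {d : α → ℝ≥0∞} {f : DAT α → ℝ≥0∞} {T : DAT α} (hf : IsExactTA d f T) :
    IsTA d f T := by
  intro v hv
  match v, hf v hv with
  | .bas _, h => exact h
  | .or _, h => exact h.ge
  | .and _, h => exact h.ge
  | .sand cs, ⟨hbad, hgood⟩ =>
    refine ⟨fun c hc => ?_, hbad⟩
    by_cases hb : SandBad d f cs
    · simp [hbad hb]
    · rw [hgood hb c hc]

def SandOrderBad (d : α → ℝ≥0∞) (f : DAT α → ℝ≥0∞) (cs : List (DAT α)) : Prop :=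
  ∃ i, ∃ h : i + 1 < cs.length, ∃ a a',
    IsBasDesc (cs.get ⟨i, Nat.lt_of_succ_lt h⟩) a ∧
    IsBasDesc (cs.get ⟨i + 1, h⟩) a' ∧
    f (.bas a') - d a' < f (.bas a) ∧ f (.bas a) < ⊤

theorem sandBad_iff {d : α → ℝ≥0∞} {f : DAT α → ℝ≥0∞} {cs : List (DAT α)} :
    SandBad d f cs ↔ (∃ c ∈ cs, f c = ⊤) ∨ SandOrderBad d f cs :=
  Iff.rfl

theorem sandOrderBad_congr {d : α → ℝ≥0∞} {f g : DAT α → ℝ≥0∞} {cs : List (DAT α)}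
    (hfg : ∀ a, f (.bas a) = g (.bas a)) : SandOrderBad d f cs ↔ SandOrderBad d g cs := by
  simp only [SandOrderBad, hfg]

open Classical in
noncomputable def exactify (d : α → ℝ≥0∞) (f : DAT α → ℝ≥0∞) : DAT α → ℝ≥0∞
  | .bas a => f (.bas a)
  | .or cs => ⨅ c ∈ cs.attach, exactify d f c.1
  | .and cs => ⨆ c ∈ cs.attach, exactify d f c.1
  | .sand cs =>
      if (∃ c ∈ cs.attach, exactify d f c.1 = ⊤) ∨ SandOrderBad d f cs then ⊤
      else (cs.attach.map fun c => exactify d f c.1).getLast?.getD 0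
  decreasing_by all_goals (simp_wf; have := List.sizeOf_lt_of_mem ‹{c // c ∈ cs}›.2; omega)

section exactify

variable (d : α → ℝ≥0∞) (f : DAT α → ℝ≥0∞) (cs : List (DAT α))

theorem exactify_bas (a : α) : exactify d f (.bas a) = f (.bas a) := by
  rw [exactify]

theorem exactify_or : exactify d f (.or cs) = ⨅ c ∈ cs, exactify d f c := by
  rw [exactify, iInf_subtype']
  simp [iInf_subtype]

theorem exactify_and : exactify d f (.and cs) = ⨆ c ∈ cs, exactify d f c := by
  rw [exactify, iSup_subtype']
  simp [iSup_subtype]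

open Classical in
theorem exactify_sand : exactify d f (.sand cs) =
    if SandBad d (exactify d f) cs then ⊤ else (cs.map (exactify d f)).getLast?.getD 0 := by
  rw [exactify, sandBad_iff, sandOrderBad_congr (exactify_bas d f), List.attach_map_val]
  simp

end exactify

theorem isExactTA_exactify {d : α → ℝ≥0∞} {f : DAT α → ℝ≥0∞} {T : DAT α} (hf : IsTA d f T) :
    IsExactTA d (exactify d f) T := by
  intro v hv
  match v with
  | .bas a => exact (hf _ hv).trans_eq (exactify_bas d f a).symm
  | .or cs => exact exactify_or d f cs
  | .and cs => exact exactify_and d f cs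
  | .sand cs =>
    refine ⟨fun hb => by simp [exactify_sand, hb], fun hb c hc => ?_⟩
    simp [exactify_sand, hb, List.getLast?_map, hc]

theorem SandBad.of_exactify {d : α → ℝ≥0∞} {f : DAT α → ℝ≥0∞} {cs : List (DAT α)}
    (hle : ∀ c ∈ cs, exactify d f c ≤ f c) (hb : SandBad d (exactify d f) cs) :
    SandBad d f cs := by
  rcases sandBad_iff.1 hb with ⟨c, hc, htop⟩ | horder
  · exact .inl ⟨c, hc, top_le_iff.1 (htop ▸ hle c hc)⟩
  · exact .inr ((sandOrderBad_congr (exactify_bas d f)).1 horder)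

theorem exactify_le {d : α → ℝ≥0∞} {f : DAT α → ℝ≥0∞} :
    ∀ {T : DAT α}, IsTA d f T → exactify d f T ≤ f T
  | .bas a, _ => (exactify_bas d f a).le
  | .or cs, hf => by
    rw [exactify_or]
    refine le_trans (iInf₂_mono fun c hc => ?_) (hf _ (.refl _))
    exact exactify_le (hf.of_subnode (.or hc (.refl c)))
  | .and cs, hf => by
    rw [exactify_and]
    refine le_trans (iSup₂_mono fun c hc => ?_) (hf _ (.refl _))
    exact exactify_le (hf.of_subnode (.and hc (.refl c)))
  | .sand cs, hf => by
    have hle : ∀ c ∈ cs, exactify d f c ≤ f c := fun c hc =>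
      exactify_le (hf.of_subnode (.sand hc (.refl c)))
    obtain ⟨hlast, hbad⟩ := hf _ (.refl _)
    rw [exactify_sand]
    split_ifs with hb
    · simp [hbad (hb.of_exactify hle)]
    · cases hc : cs.getLast? with
      | none => simp [List.getLast?_map, hc]
      | some c =>
        simp only [List.getLast?_map, hc, Option.map_some, Option.getD_some]
        exact (hle c (List.mem_of_getLast? hc)).trans (hlast c hc)
  decreasing_by all_goals (simp_wf; have := List.sizeOf_lt_of_mem hc; omega)

end DAT

theorem stmt10_general {α : Type} (T : DAT α) (d : α → ℝ≥0∞) :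
    (∀ f, DAT.IsTA d f T → ∃ f', DAT.IsExactTA d f' T ∧ f' T ≤ f T) ∧
    (⨅ f ∈ {f | DAT.IsTA d f T}, f T) =
      ⨅ f ∈ {f | DAT.IsExactTA d f T}, f T := by
  refine ⟨fun f hf => ⟨_, DAT.isExactTA_exactify hf, DAT.exactify_le hf⟩, le_antisymm ?_ ?_⟩
  · exact le_iInf₂ fun f hf => iInf₂_le f (DAT.IsExactTA.isTA hf)
  · exact le_iInf₂ fun f hf =>
      (iInf₂_le (DAT.exactify d f) (DAT.isExactTA_exactify hf)).trans (DAT.exactify_le hf)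

/-- every time assignment is dominated at the root by an exact
one, so the two minima agree. -/
theorem stmt10 {α : Type} (T : DAT α) (d : α → ℝ≥0∞) (hd : ∀ a, d a ≠ ⊤) :
    (∀ f, DAT.IsTA d f T → ∃ f', DAT.IsExactTA d f' T ∧ f' T ≤ f T) ∧
    (⨅ f ∈ {f | DAT.IsTA d f T}, f T) =
      ⨅ f ∈ {f | DAT.IsExactTA d f T}, f T :=
  stmt10_general T d
end

section
/- For every successful attack O = (A, ≺) on a dynamic attack tree T there exists an exact time assignment f with f_R ≤ t(O, d), obtained by setting f_a = ∞ for a ∉ A, f_a = d_a + max_{a' ≺ a} f_{a'} for a ∈ A (max over empty set is 0), and propagating exactly through gates; in particular f_v < ∞ for every node v reached by O. -/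
open scoped ENNReal

/-!
Let every step of the attack start as soon as all its `≺`-predecessors have finished: step `a`
finishes at `d a` plus the latest finish time of a predecessor, and steps outside the attack at
`∞`. Propagating these values exactly through the gates gives an exact time assignment. The
finish time of a step is bounded by the total duration of a chain ending in it, hence by
`t(O, d)`. On a node reached by `O`, the BASes of consecutive SAND children are ordered by `≺`,
so their finish times differ by at least the duration of the later one; hence no SAND gate
below a reached node is forced to `∞`, and by induction on reachability every reached node gets
a value at most `t(O, d)`.
-/

namespace DAT

variable {α : Type}

section Duration

variable {A : Finset α} {r : α → α → Prop} {C : Finset α}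

theorem exists_maxChain_superset (hCA : C ⊆ A) (hC : IsChain r ↑C) :
    ∃ D, MaxChain ↑A r D ∧ C ⊆ D := by
  classical
  let chains := A.powerset.filter fun D => C ⊆ D ∧ IsChain r ↑D
  have hC_mem : C ∈ chains := by simp [chains, hCA, hC]
  obtain ⟨D, hD, hD_max⟩ := chains.exists_max_image Finset.card ⟨C, hC_mem⟩
  simp only [chains, Finset.mem_filter, Finset.mem_powerset] at hD
  refine ⟨D, ⟨Finset.coe_subset.2 hD.1, hD.2.2, fun D' hD'A hD' hDD' => ?_⟩, hD.2.1⟩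
  refine (Finset.eq_of_subset_of_card_le hDD' (hD_max D' ?_)).symm
  simp [chains, Finset.coe_subset.1 hD'A, hD.2.1.trans hDD', hD']

theorem sum_le_dur_of_isChain (d : α → ℝ≥0∞) (hCA : C ⊆ A) (hC : IsChain r ↑C) :
    ∑ a ∈ C, d a ≤ dur ↑A r d := by
  obtain ⟨D, hD, hCD⟩ := exists_maxChain_superset hCA hC
  calc ∑ a ∈ C, d a ≤ ∑ a ∈ D, d a := Finset.sum_le_sum_of_subset hCD
    _ ≤ dur ↑A r d := le_iSup₂ (f := fun D (_ : MaxChain ↑A r D) => ∑ a ∈ D, d a) D hD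

theorem dur_lt_top {d : α → ℝ≥0∞} (hd : ∀ a ∈ A, d a ≠ ⊤) : dur ↑A r d < ⊤ :=
  calc dur ↑A r d ≤ ∑ a ∈ A, d a :=
        iSup₂_le fun _ hD => Finset.sum_le_sum_of_subset (Finset.coe_subset.1 hD.1)
    _ < ⊤ := ENNReal.sum_lt_top.2 fun a ha => (hd a ha).lt_top

end Duration

end DAT

namespace Attack

variable {α : Type} (O : Attack α) (d : α → ℝ≥0∞)

open Classical in
noncomputable def predCount (a : α) : ℕ := (O.carrier.filter (O.lt · a)).card

theorem predCount_lt_of_lt {a b : α} (h : O.lt b a) : O.predCount b < O.predCount a := by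
  classical
  refine Finset.card_lt_card ((Finset.ssubset_iff_of_subset fun x hx => ?_).2 ⟨b, ?_, ?_⟩)
  · simp only [Finset.mem_filter] at hx ⊢
    exact ⟨hx.1, O.lt_trans hx.2 h⟩
  · simp [(O.lt_mem h).1, h]
  · simp [O.lt_irrefl]

noncomputable def finishTime (a : α) : ℝ≥0∞ :=
  open Classical in
  if a ∈ O.carrier then d a + ⨆ b, ⨆ _ : O.lt b a, finishTime b else ⊤
termination_by O.predCount a
decreasing_by exact O.predCount_lt_of_lt ‹_›

variable {O d}

theorem finishTime_of_mem {a : α} (ha : a ∈ O.carrier) :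
    O.finishTime d a = d a + ⨆ b ∈ {x | O.lt x a}, O.finishTime d b := by
  rw [finishTime, if_pos ha]; rfl

theorem finishTime_of_not_mem {a : α} (ha : a ∉ O.carrier) : O.finishTime d a = ⊤ := by
  rw [finishTime, if_neg ha]

theorem le_finishTime (a : α) : d a ≤ O.finishTime d a := by
  by_cases ha : a ∈ O.carrier
  · rw [finishTime_of_mem ha]; exact le_self_add
  · rw [finishTime_of_not_mem ha]; exact le_top

theorem finishTime_add_le_of_lt {a b : α} (h : O.lt a b) :
    O.finishTime d a + d b ≤ O.finishTime d b := by
  rw [finishTime_of_mem (O.lt_mem h).2, add_comm]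
  gcongr
  exact le_iSup₂ (f := fun x (_ : O.lt x b) => O.finishTime d x) a h

theorem exists_isChain_finishTime_le {a : α} (ha : a ∈ O.carrier) :
    ∃ C ⊆ O.carrier, IsChain O.lt ↑C ∧ (∀ x ∈ C, x = a ∨ O.lt x a) ∧
      O.finishTime d a ≤ ∑ x ∈ C, d x := by
  classical
  rw [finishTime_of_mem ha]
  rcases (O.carrier.filter (O.lt · a)).eq_empty_or_nonempty with hpred | hpred
  · have hsup : ⨆ b ∈ {x | O.lt x a}, O.finishTime d b = 0 := by
      refine le_antisymm (iSup₂_le fun b hb => ?_) bot_le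
      have : b ∈ O.carrier.filter (O.lt · a) := Finset.mem_filter.2 ⟨(O.lt_mem hb).1, hb⟩
      simp [hpred] at this
    refine ⟨{a}, by simpa using ha, by simp, by simp, by rw [hsup]; simp⟩
  · obtain ⟨b, hb, hb_max⟩ := Finset.exists_max_image _ (O.finishTime d) hpred
    have hba : O.lt b a := (Finset.mem_filter.1 hb).2
    obtain ⟨C, hCO, hC, hC_below, hC_sum⟩ := exists_isChain_finishTime_le (O.lt_mem hba).1
    have hC_lt : ∀ x ∈ C, O.lt x a := fun x hx =>
      (hC_below x hx).elim (fun hxb => hxb ▸ hba) (O.lt_trans · hba)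
    have haC : a ∉ C := fun h => O.lt_irrefl a (hC_lt a h)
    refine ⟨insert a C, Finset.insert_subset ha hCO, ?_, ?_, ?_⟩
    · rw [Finset.coe_insert]
      exact hC.insert fun x hx _ => Or.inr (hC_lt x hx)
    · simpa using fun x hx => Or.inr (hC_lt x hx)
    · rw [Finset.sum_insert haC]
      gcongr
      refine (iSup₂_le fun x hx => hb_max x ?_).trans hC_sum
      exact Finset.mem_filter.2 ⟨(O.lt_mem hx).1, hx⟩
termination_by O.predCount a
decreasing_by exact O.predCount_lt_of_lt hba

theorem finishTime_le_dur {a : α} (ha : a ∈ O.carrier) :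
    O.finishTime d a ≤ DAT.dur ↑O.carrier O.lt d := by
  obtain ⟨C, hCO, hC, -, hC_sum⟩ := exists_isChain_finishTime_le (d := d) ha
  exact hC_sum.trans (DAT.sum_le_dur_of_isChain d hCO hC)

end Attack

namespace DAT

variable {α : Type}

def SandOrderViolated (d g : α → ℝ≥0∞) (cs : List (DAT α)) : Prop :=
  ∃ i, ∃ h : i + 1 < cs.length, ∃ a a',
    IsBasDesc (cs.get ⟨i, Nat.lt_of_succ_lt h⟩) a ∧
    IsBasDesc (cs.get ⟨i + 1, h⟩) a' ∧
    g a' - d a' < g a ∧ g a < ⊤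

open Classical in
noncomputable def propagate (d g : α → ℝ≥0∞) : DAT α → ℝ≥0∞
  | .bas a => g a
  | .or cs => ⨅ c ∈ cs, propagate d g c
  | .and cs => ⨆ c ∈ cs, propagate d g c
  | .sand cs =>
      -- `∃ c, ∃ _ : c ∈ cs` rather than `∃ c ∈ cs`, so that the recursive call sees `c ∈ cs`
      if (∃ c, ∃ _ : c ∈ cs, propagate d g c = ⊤) ∨ SandOrderViolated d g cs then ⊤
      else if h : cs = [] then 0 else propagate d g (cs.getLast h)
  decreasing_by
    all_goals simp_wf
    all_goals first
      | have := List.sizeOf_lt_of_mem ‹_ ∈ cs›; omega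
      | have := List.sizeOf_lt_of_mem (List.getLast_mem h); omega

variable {d g : α → ℝ≥0∞}

@[simp]
theorem propagate_bas (a : α) : propagate d g (.bas a) = g a := by
  rw [propagate]

theorem sandBad_propagate_iff {cs : List (DAT α)} :
    SandBad d (propagate d g) cs ↔ (∃ c, ∃ _ : c ∈ cs, propagate d g c = ⊤) ∨
      SandOrderViolated d g cs := by
  simp only [SandBad, SandOrderViolated, propagate_bas, exists_prop]

theorem localExact_propagate (hg : ∀ a, d a ≤ g a) (v : DAT α) :
    LocalExact d (propagate d g) v := by
  cases v with
  | bas a => simpa [LocalExact] using hg a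
  | or cs => rw [LocalExact, propagate]
  | and cs => rw [LocalExact, propagate]
  | sand cs =>
    refine ⟨fun hbad => ?_, fun hgood c hc => ?_⟩
    · rw [propagate, if_pos (sandBad_propagate_iff.1 hbad)]
    · have hcs : cs ≠ [] := by rintro rfl; simp at hc
      rw [propagate, if_neg fun h => hgood (sandBad_propagate_iff.2 h), dif_neg hcs]
      rw [List.getLast?_eq_some_getLast hcs, Option.some.injEq] at hc
      rw [hc]

theorem propagate_le_of_reaches {A : Finset α} {r : α → α → Prop} {M : ℝ≥0∞}
    (hd : ∀ a, d a ≠ ⊤) (hM : M ≠ ⊤) (hg_le : ∀ a ∈ A, g a ≤ M) (hg_top : ∀ a ∉ A, g a = ⊤)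
    (hg_lt : ∀ a b, r a b → g a + d b ≤ g b) {v : DAT α} (hv : Reaches ↑A r v) :
    propagate d g v ≤ M := by
  induction hv with
  | bas ha => simpa using hg_le _ ha
  | or hc _ ih => rw [propagate]; exact (iInf₂_le _ hc).trans ih
  | and _ ih => rw [propagate]; exact iSup₂_le ih
  | @sand cs _ hord ih =>
    have hfin : ¬ ∃ c, ∃ _ : c ∈ cs, propagate d g c = ⊤ := fun ⟨c, hc, htop⟩ =>
      hM (top_le_iff.1 (htop ▸ ih c hc))
    have hordered : ¬ SandOrderViolated d g cs := by
      rintro ⟨i, hi, a, b, ha, hb, hviol, ha_fin⟩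
      have haA : a ∈ A := by_contra fun h => ha_fin.ne (hg_top a h)
      by_cases hbA : b ∈ A
      · have := ENNReal.le_sub_of_add_le_right (hd b) (hg_lt a b (hord i hi a b haA hbA ha hb))
        exact hviol.not_ge this
      · rw [hg_top b hbA, ENNReal.top_sub (hd b)] at hviol
        exact not_top_lt hviol
    rw [propagate, if_neg (not_or.2 ⟨hfin, hordered⟩)]
    split_ifs with hcs
    · exact zero_le
    · exact ih _ (List.getLast_mem hcs)

end DAT

/-- every successful attack induces an exact time assignment
whose root value is at most the attack's duration, finite on all reached
nodes. -/
theorem stmt13 {α : Type} (T : DAT α) (d : α → ℝ≥0∞) (hd : ∀ a, d a ≠ ⊤)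
    (O : Attack α) (hO : DAT.Successful O T) :
    ∃ f : DAT α → ℝ≥0∞, DAT.IsExactTA d f T ∧
      (∀ a, a ∉ O.carrier → f (.bas a) = ⊤) ∧
      (∀ a ∈ O.carrier, f (.bas a) = d a + ⨆ a' ∈ {x | O.lt x a}, f (.bas a')) ∧
      (∀ v, DAT.Subnode v T → DAT.Reaches (↑O.carrier) O.lt v → f v < ⊤) ∧
      f T ≤ DAT.dur (↑O.carrier) O.lt d := by
  have hdur : DAT.dur ↑O.carrier O.lt d ≠ ⊤ := (DAT.dur_lt_top fun a _ => hd a).ne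
  have h_le_dur {v : DAT α} (hv : DAT.Reaches ↑O.carrier O.lt v) :
      DAT.propagate d (O.finishTime d) v ≤ DAT.dur ↑O.carrier O.lt d :=
    DAT.propagate_le_of_reaches hd hdur (fun _ => Attack.finishTime_le_dur)
      (fun _ => Attack.finishTime_of_not_mem) (fun _ _ => Attack.finishTime_add_le_of_lt) hv
  refine ⟨DAT.propagate d (O.finishTime d),
    fun v _ => DAT.localExact_propagate Attack.le_finishTime v, fun a ha => ?_, fun a ha => ?_,
    fun v _ hv => (h_le_dur hv).trans_lt hdur.lt_top, h_le_dur hO⟩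
  · simpa using Attack.finishTime_of_not_mem ha
  · simpa using Attack.finishTime_of_mem ha
end

section
/- Let T be a dynamic attack tree with durations d, and let M = 1 + Σ_{a ∈ BAS} d_a. Then there exists a time assignment f minimizing f at the root over all time assignments such that f_v ∈ [0, M−1] ∪ {∞} for all nodes v. -/
open scoped ENNReal

/-! A time assignment `g` lies above the exact assignment induced by its own BAS completion
times `b`. Shifting every BAS left, to complete at the longest total duration of a chain of BASes
that `b` orders before it, moves no BAS later and keeps every ordering constraint
`b x ≤ b y - d y`; so the shifted times still induce an assignment below `g`, and they are `∞` or
sums of durations over subsets of the BASes. The root value is therefore minimized over the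
finitely many assignments induced by such times, and every value of the minimizer is `∞` or such
a subset sum, hence at most `∑ a ∈ B, d a`. -/

namespace DAT

variable {α : Type}

theorem IsBasDesc.subnode {v : DAT α} {a : α} (h : IsBasDesc v a) : Subnode (.bas a) v := by
  induction h with
  | bas a => exact .refl _
  | or hc _ ih => exact .or hc ih
  | and hc _ ih => exact .and hc ih
  | sand hc _ ih => exact .sand hc ih

theorem Subnode.isBasDesc {v T : DAT α} {a : α} (h : Subnode v T) (ha : IsBasDesc v a) :
    IsBasDesc T a := by
  induction h with
  | refl => exact ha
  | or hc _ ih => exact .or hc ih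
  | and hc _ ih => exact .and hc ih
  | sand hc _ ih => exact .sand hc ih

@[elab_as_elim]
theorem recOnMem {P : DAT α → Prop} (v : DAT α) (bas : ∀ a, P (.bas a))
    (or : ∀ cs, (∀ c ∈ cs, P c) → P (.or cs)) (and : ∀ cs, (∀ c ∈ cs, P c) → P (.and cs))
    (sand : ∀ cs, (∀ c ∈ cs, P c) → P (.sand cs)) : P v :=
  match v with
  | .bas a => bas a
  | .or cs => or cs fun c _ => recOnMem c bas or and sand
  | .and cs => and cs fun c _ => recOnMem c bas or and sand
  | .sand cs => sand cs fun c _ => recOnMem c bas or and sand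
  decreasing_by all_goals (simp_wf; have := List.sizeOf_lt_of_mem (by assumption); omega)

theorem IsTA.le_bas {d : α → ℝ≥0∞} {g : DAT α → ℝ≥0∞} {T : DAT α} (hg : IsTA d g T) {a : α}
    (ha : IsBasDesc T a) : d a ≤ g (.bas a) :=
  hg _ ha.subnode

theorem SandBad.mono {d : α → ℝ≥0∞} {f g : DAT α → ℝ≥0∞} {cs : List (DAT α)}
    (hle : ∀ c ∈ cs, f c ≤ g c)
    (hpair : ∀ a a', IsBasDesc (.sand cs) a → IsBasDesc (.sand cs) a' →
      f (.bas a') - d a' < f (.bas a) → f (.bas a) < ⊤ →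
      g (.bas a') - d a' < g (.bas a) ∧ g (.bas a) < ⊤) :
    SandBad d f cs → SandBad d g cs := by
  rintro (⟨c, hc, hfc⟩ | ⟨i, hi, a, a', ha, ha', hlt, hfin⟩)
  · exact .inl ⟨c, hc, top_le_iff.1 (hfc ▸ hle c hc)⟩
  · exact .inr ⟨i, hi, a, a', ha, ha',
      hpair a a' (.sand (List.get_mem _ _) ha) (.sand (List.get_mem _ _) ha') hlt hfin⟩

/-- `SandBad` restricted to the ordering constraints, with BAS completion times `b`. -/
def PairBad (d b : α → ℝ≥0∞) (cs : List (DAT α)) : Prop :=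
  ∃ i, ∃ h : i + 1 < cs.length, ∃ a a',
    IsBasDesc (cs.get ⟨i, Nat.lt_of_succ_lt h⟩) a ∧
    IsBasDesc (cs.get ⟨i + 1, h⟩) a' ∧
    b a' - d a' < b a ∧ b a < ⊤

open scoped Classical in
/-- The exact time assignment in which every BAS `a` completes at `max (β a) (d a)`. -/
noncomputable def inducedTA (d β : α → ℝ≥0∞) : DAT α → ℝ≥0∞
  | .bas a => max (β a) (d a)
  | .or cs => ⨅ c : {x // x ∈ cs}, inducedTA d β c.1
  | .and cs => ⨆ c : {x // x ∈ cs}, inducedTA d β c.1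
  | .sand cs =>
      if (∃ c : {x // x ∈ cs}, inducedTA d β c.1 = ⊤) ∨ PairBad d (fun a => max (β a) (d a)) cs
      then ⊤
      else if h : cs = [] then 0 else inducedTA d β (cs.getLast h)
  decreasing_by
    all_goals (simp_wf; first
      | (have := List.sizeOf_lt_of_mem c.2; omega)
      | (have := List.sizeOf_lt_of_mem a.2; omega)
      | (have := List.sizeOf_lt_of_mem (List.getLast_mem h); omega))

section inducedTA

variable {d β : α → ℝ≥0∞}

theorem inducedTA_bas (a : α) : inducedTA d β (.bas a) = max (β a) (d a) := by
  rw [inducedTA]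

theorem inducedTA_or (cs : List (DAT α)) : inducedTA d β (.or cs) = ⨅ c ∈ cs, inducedTA d β c := by
  rw [inducedTA, iInf_subtype']

theorem inducedTA_and (cs : List (DAT α)) :
    inducedTA d β (.and cs) = ⨆ c ∈ cs, inducedTA d β c := by
  rw [inducedTA, iSup_subtype']

open scoped Classical in
theorem inducedTA_sand (cs : List (DAT α)) :
    inducedTA d β (.sand cs) =
      if SandBad d (inducedTA d β) cs then ⊤
      else if h : cs = [] then 0 else inducedTA d β (cs.getLast h) := by
  rw [inducedTA, SandBad, PairBad]
  simp only [Subtype.exists, exists_prop, inducedTA_bas]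

theorem isTA_inducedTA (T : DAT α) : IsTA d (inducedTA d β) T := by
  intro v _
  cases v with
  | bas a => exact (inducedTA_bas (β := β) a).ge.trans' (le_max_right _ _)
  | or cs => exact (inducedTA_or cs).ge
  | and cs => exact (inducedTA_and cs).ge
  | sand cs =>
    refine ⟨fun c hc => ?_, fun hbad => by rw [inducedTA_sand, if_pos hbad]⟩
    have hne : cs ≠ [] := by rintro rfl; simp at hc
    rw [List.getLast?_eq_some_getLast hne, Option.some_inj] at hc
    rw [inducedTA_sand]
    split
    · exact le_top
    · rw [hc]

theorem inducedTA_le {g : DAT α → ℝ≥0∞} {T : DAT α} (hg : IsTA d g T)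
    (hbas : ∀ a, IsBasDesc T a → inducedTA d β (.bas a) ≤ g (.bas a))
    (hpair : ∀ a a', IsBasDesc T a → IsBasDesc T a' →
      inducedTA d β (.bas a') - d a' < inducedTA d β (.bas a) → inducedTA d β (.bas a) < ⊤ →
      g (.bas a') - d a' < g (.bas a) ∧ g (.bas a) < ⊤) :
    ∀ v, Subnode v T → inducedTA d β v ≤ g v := by
  intro v
  induction v using recOnMem with
  | bas a => exact fun hv => hbas a (hv.isBasDesc (.bas a))
  | or cs ih =>
    intro hv
    rw [inducedTA_or]
    exact (iInf₂_mono fun c hc => ih c hc ((Subnode.or hc (.refl c)).trans hv)).trans (hg _ hv)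
  | and cs ih =>
    intro hv
    rw [inducedTA_and]
    exact (iSup₂_mono fun c hc => ih c hc ((Subnode.and hc (.refl c)).trans hv)).trans (hg _ hv)
  | sand cs ih =>
    intro hv
    have hchild : ∀ c ∈ cs, inducedTA d β c ≤ g c :=
      fun c hc => ih c hc ((Subnode.sand hc (.refl c)).trans hv)
    obtain ⟨hlast, hbad⟩ := hg _ hv
    rw [inducedTA_sand]
    split
    · next hbadF =>
      exact (hbad (hbadF.mono hchild fun a a' ha ha' =>
        hpair a a' (hv.isBasDesc ha) (hv.isBasDesc ha'))).ge
    · split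
      · exact zero_le
      · next hne =>
        exact (hchild _ (List.getLast_mem hne)).trans (hlast _ (List.getLast?_eq_some_getLast hne))

theorem inducedTA_mem {T : DAT α} {S : Set ℝ≥0∞} (hzero : 0 ∈ S) (htop : ⊤ ∈ S)
    (hbas : ∀ a, IsBasDesc T a → max (β a) (d a) ∈ S) :
    ∀ v, Subnode v T → inducedTA d β v ∈ S := by
  intro v
  induction v using recOnMem with
  | bas a => exact fun hv => (inducedTA_bas a).symm ▸ hbas a (hv.isBasDesc (.bas a))
  | or cs ih =>
    intro hv
    rw [inducedTA_or]
    exact (LinearOrder.infClosed S).biInf_mem (List.finite_toSet cs) htop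
      fun c hc => ih c hc ((Subnode.or hc (.refl c)).trans hv)
  | and cs ih =>
    intro hv
    rw [inducedTA_and]
    exact (LinearOrder.supClosed S).biSup_mem (List.finite_toSet cs) hzero
      fun c hc => ih c hc ((Subnode.and hc (.refl c)).trans hv)
  | sand cs ih =>
    intro hv
    rw [inducedTA_sand]
    split
    · exact htop
    · split
      · exact hzero
      · next hne =>
        exact ih _ (List.getLast_mem hne) ((Subnode.sand (List.getLast_mem hne) (.refl _)).trans hv)

end inducedTA

def subsetSums (d : α → ℝ≥0∞) (B : Finset α) : Set ℝ≥0∞ :=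
  (fun s => ∑ a ∈ s, d a) '' ↑B.powerset

theorem finite_subsetSums (d : α → ℝ≥0∞) (B : Finset α) : (subsetSums d B).Finite :=
  B.powerset.finite_toSet.image _

theorem zero_mem_subsetSums (d : α → ℝ≥0∞) (B : Finset α) : 0 ∈ subsetSums d B :=
  ⟨∅, by simp, Finset.sum_empty⟩

theorem le_sum_of_mem_subsetSums {d : α → ℝ≥0∞} {B : Finset α} {x : ℝ≥0∞}
    (hx : x ∈ subsetSums d B) : x ≤ ∑ a ∈ B, d a := by
  obtain ⟨s, hs, rfl⟩ := hx
  exact Finset.sum_le_sum_of_subset (Finset.mem_powerset.1 hs)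

section shift

variable {d b : α → ℝ≥0∞} {B : Finset α}

/-- Under completion times `b`, the BAS `y` starts (at `b y - d y`) no earlier than `x`
completes, and completes strictly later. -/
def StartsAfter (d b : α → ℝ≥0∞) (y x : α) : Prop :=
  b x < b y ∧ b x ≤ b y - d y

/-- Chains are listed latest first. -/
def IsChainBelow (d b : α → ℝ≥0∞) (B : Finset α) (t : ℝ≥0∞) (l : List α) : Prop :=
  (∀ x ∈ l, x ∈ B ∧ b x ≤ t) ∧ l.Pairwise (StartsAfter d b)

/-- The longest total duration of a chain completed by `t`: a BAS completing at `t` under `b`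
can complete at `shift d b B t` once all BASes are shifted as early as the order of `b` allows. -/
noncomputable def shift (d b : α → ℝ≥0∞) (B : Finset α) (t : ℝ≥0∞) : ℝ≥0∞ :=
  if t = ⊤ then ⊤ else sSup ((fun l => (l.map d).sum) '' {l | IsChainBelow d b B t l})

theorem sum_le_of_pairwise_startsAfter {l : List α} {t : ℝ≥0∞} (hdb : ∀ x ∈ l, d x ≤ b x)
    (hl : l.Pairwise (StartsAfter d b)) (ht : ∀ x ∈ l, b x ≤ t) : (l.map d).sum ≤ t := by
  induction l generalizing t with
  | nil => exact zero_le
  | cons y l ih =>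
    rw [List.pairwise_cons] at hl
    have hrest : (l.map d).sum ≤ b y - d y :=
      ih (fun x hx => hdb x (by simp [hx])) hl.2 fun x hx => (hl.1 x hx).2
    calc ((y :: l).map d).sum = d y + (l.map d).sum := List.sum_cons
      _ ≤ d y + (b y - d y) := by gcongr
      _ = b y := add_tsub_cancel_of_le (hdb y (by simp))
      _ ≤ t := ht y (by simp)

theorem IsChainBelow.sum_mem [DecidableEq α] {t : ℝ≥0∞} {l : List α}
    (hl : IsChainBelow d b B t l) : (l.map d).sum ∈ subsetSums d B := by
  have hnodup : l.Nodup := hl.2.imp fun h heq => (heq ▸ h.1).false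
  rw [subsetSums]
  refine ⟨l.toFinset, ?_, List.sum_toFinset d hnodup⟩
  exact Finset.mem_powerset.2 fun x hx => (hl.1 x (List.mem_toFinset.1 hx)).1

theorem exists_isChainBelow_sum_eq_shift {t : ℝ≥0∞} (ht : t ≠ ⊤) :
    ∃ l, IsChainBelow d b B t l ∧ (l.map d).sum = shift d b B t := by
  classical
  rw [shift, if_neg ht]
  set sums := (fun l => (l.map d).sum) '' {l | IsChainBelow d b B t l}
  have hne : sums.Nonempty := ⟨0, [], ⟨by simp, .nil⟩, rfl⟩
  have hfin : sums.Finite :=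
    (finite_subsetSums d B).subset fun _ ⟨_, hl, hsum⟩ => hsum ▸ hl.sum_mem
  exact hne.csSup_mem hfin

theorem shift_top : shift d b B ⊤ = ⊤ :=
  if_pos rfl

theorem shift_mem (t : ℝ≥0∞) : shift d b B t ∈ insert ⊤ (subsetSums d B) := by
  classical
  by_cases ht : t = ⊤
  · rw [ht, shift_top]
    exact Set.mem_insert _ _
  · obtain ⟨l, hl, hsum⟩ := exists_isChainBelow_sum_eq_shift (d := d) (b := b) (B := B) ht
    exact .inr (hsum ▸ hl.sum_mem)

theorem shift_le (hdb : ∀ x ∈ B, d x ≤ b x) (t : ℝ≥0∞) : shift d b B t ≤ t := by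
  by_cases ht : t = ⊤
  · rw [ht]
    exact le_top
  · rw [shift, if_neg ht]
    exact sSup_le fun _ ⟨l, hl, hsum⟩ =>
      hsum ▸ sum_le_of_pairwise_startsAfter (fun x hx => hdb x (hl.1 x hx).1) hl.2
        fun x hx => (hl.1 x hx).2

theorem le_shift {a : α} (ha : a ∈ B) : d a ≤ shift d b B (b a) := by
  rw [shift]
  split
  · exact le_top
  · refine le_sSup ⟨[a], ⟨by simpa using ha, List.pairwise_singleton _ _⟩, ?_⟩
    simp

theorem shift_add_le (hdb : ∀ x ∈ B, d x ≤ b x) {x y : α} (hy : y ∈ B) (hby : b y ≠ ⊤)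
    (hxy : b x ≤ b y - d y) : shift d b B (b x) + d y ≤ shift d b B (b y) := by
  have hbx : b x ≠ ⊤ := ne_top_of_le_ne_top hby (hxy.trans tsub_le_self)
  rcases (hxy.trans tsub_le_self).lt_or_eq with hlt | heq
  · obtain ⟨l, hl, hsum⟩ := exists_isChainBelow_sum_eq_shift (d := d) (B := B) hbx
    have hchain : IsChainBelow d b B (b y) (y :: l) := by
      refine ⟨?_, List.pairwise_cons.2 ⟨fun z hz => ?_, hl.2⟩⟩
      · simp only [List.mem_cons, forall_eq_or_imp]
        exact ⟨⟨hy, le_rfl⟩, fun z hz => ⟨(hl.1 z hz).1, (hl.1 z hz).2.trans hlt.le⟩⟩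
      · exact ⟨(hl.1 z hz).2.trans_lt hlt, (hl.1 z hz).2.trans hxy⟩
    rw [← hsum, add_comm, ← List.sum_cons, ← List.map_cons, shift, if_neg hby]
    exact le_sSup ⟨_, hchain, rfl⟩
  · have hdy : d y = 0 := by
      by_contra hdy
      have hby0 : b y ≠ 0 := fun h => hdy (le_antisymm (h ▸ hdb y hy) zero_le)
      exact (ENNReal.sub_lt_self hby hby0 hdy).not_ge (heq ▸ hxy)
    rw [hdy, add_zero, heq]

theorem shift_le_shift_sub (hdb : ∀ x ∈ B, d x ≤ b x) {x y : α} (hy : y ∈ B)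
    (hxy : b x ≤ b y - d y) : shift d b B (b x) ≤ shift d b B (b y) - d y := by
  by_cases hby : b y = ⊤
  · rw [hby] at hxy ⊢
    rw [shift_top]
    exact (shift_le hdb _).trans hxy
  · exact ENNReal.le_sub_of_add_le_right (ne_top_of_le_ne_top hby (hdb y hy))
      (shift_add_le hdb hy hby hxy)

end shift

theorem exists_inducedTA_le {d : α → ℝ≥0∞} {g : DAT α → ℝ≥0∞} {T : DAT α} {B : Finset α}
    (hB : (↑B : Set α) = {a | IsBasDesc T a}) (hg : IsTA d g T) :
    ∃ β, (∀ a ∈ B, max (β a) (d a) ∈ insert ⊤ (subsetSums d B)) ∧ inducedTA d β T ≤ g T := by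
  set b : α → ℝ≥0∞ := fun a => g (.bas a)
  have hmem : ∀ a, a ∈ B ↔ IsBasDesc T a := Set.ext_iff.1 hB
  have hdb : ∀ x ∈ B, d x ≤ b x := fun x hx => hg.le_bas ((hmem x).1 hx)
  have hbas : ∀ a ∈ B, inducedTA d (fun a => shift d b B (b a)) (.bas a) = shift d b B (b a) :=
    fun a ha => (inducedTA_bas a).trans (max_eq_left (le_shift ha))
  refine ⟨fun a => shift d b B (b a), fun a ha => ?_, inducedTA_le hg ?_ ?_ T (.refl T)⟩
  · exact max_eq_left (le_shift ha) ▸ shift_mem _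
  · intro a ha
    rw [hbas a ((hmem a).2 ha)]
    exact shift_le hdb _
  · intro a a' ha ha' hlt hfin
    rw [hbas a ((hmem a).2 ha)] at hlt hfin
    rw [hbas a' ((hmem a').2 ha')] at hlt
    refine ⟨lt_of_not_ge fun hle => (shift_le_shift_sub hdb ((hmem a').2 ha') hle).not_gt hlt,
      lt_top_iff_ne_top.2 fun htop => hfin.ne ?_⟩
    show shift d b B (g (.bas a)) = ⊤
    rw [htop, shift_top]

end DAT

theorem stmt15_general {α : Type} (T : DAT α) (d : α → ℝ≥0∞)
    (B : Finset α) (hB : (↑B : Set α) = {a | DAT.IsBasDesc T a}) :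
    ∃ f : DAT α → ℝ≥0∞, DAT.IsTA d f T ∧ (∀ g, DAT.IsTA d g T → f T ≤ g T) ∧
      ∀ v, DAT.Subnode v T →
        f v = ⊤ ∨ f v ≤ (1 + ∑ a ∈ B, d a) - 1 := by
  open DAT in
  set S := insert ⊤ (subsetSums d B)
  have hmemS : ∀ {β : α → ℝ≥0∞}, (∀ a ∈ B, max (β a) (d a) ∈ S) → ∀ v, Subnode v T →
      inducedTA d β v ∈ S := fun hβ =>
    inducedTA_mem (.inr (zero_mem_subsetSums d B)) (.inl rfl)
      fun a ha => hβ a ((Set.ext_iff.1 hB a).2 ha)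
  set V := {x | ∃ β : α → ℝ≥0∞, (∀ a ∈ B, max (β a) (d a) ∈ S) ∧ inducedTA d β T = x}
  have hV : V.Nonempty := ⟨_, fun _ => ⊤, fun a _ => by simp [S], rfl⟩
  have hVfin : V.Finite := ((finite_subsetSums d B).insert ⊤).subset
    fun _ ⟨_, hβ, hx⟩ => hx ▸ hmemS hβ T (.refl T)
  obtain ⟨β₀, hβ₀, hmin⟩ := hV.csInf_mem hVfin
  refine ⟨inducedTA d β₀, isTA_inducedTA T, fun g hg => ?_, fun v hv => ?_⟩
  · obtain ⟨β, hβ, hle⟩ := exists_inducedTA_le hB hg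
    calc inducedTA d β₀ T = sInf V := hmin
      _ ≤ inducedTA d β T := sInf_le ⟨β, hβ, rfl⟩
      _ ≤ g T := hle
  · rw [ENNReal.add_sub_cancel_left ENNReal.one_ne_top]
    exact (hmemS hβ₀ v hv).imp id le_sum_of_mem_subsetSums

/-- there is a minimizing time assignment whose values lie in
`[0, M-1] ∪ {∞}` where `M = 1 + Σ_a d_a`. -/
theorem stmt15 {α : Type} [DecidableEq α] (T : DAT α) (d : α → ℝ≥0∞)
    (hd : ∀ a, d a ≠ ⊤) (B : Finset α) (hB : (↑B : Set α) = {a | DAT.IsBasDesc T a}) :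
    ∃ f : DAT α → ℝ≥0∞, DAT.IsTA d f T ∧ (∀ g, DAT.IsTA d g T → f T ≤ g T) ∧
      ∀ v, DAT.Subnode v T →
        f v = ⊤ ∨ f v ≤ (1 + ∑ a ∈ B, d a) - 1 :=
  stmt15_general T d B hB
end

section
/- Let T be a binary static attack tree. Define g(a) = {({a}, ∅)} for BAS a; g(OR(v₁,v₂)) = g(v₁) ∪ g(v₂); g(AND(v₁,v₂)) = {P(O₁, O₂) : O₁ ∈ g(v₁), O₂ ∈ g(v₂), P(O₁,O₂) exists}, where P takes the union of carriers and the transitive closure of the union of orders (defined when that closure is a strict order). Then g(R_T) is a set of successful attacks on T containing all minimal successful attacks. -/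
open scoped ENNReal

namespace DAT

variable {α : Type}

/-- Binary static attack trees. -/
inductive IsBinStatic : DAT α → Prop
  | bas (a : α) : IsBinStatic (.bas a)
  | or {v₁ v₂ : DAT α} : IsBinStatic v₁ → IsBinStatic v₂ → IsBinStatic (.or [v₁, v₂])
  | and {v₁ v₂ : DAT α} : IsBinStatic v₁ → IsBinStatic v₂ → IsBinStatic (.and [v₁, v₂])

/-- The bottom-up family `g` of attacks: `g(a) = {({a},∅)}`,
`g(OR(v₁,v₂)) = g(v₁) ∪ g(v₂)`, and `g(AND(v₁,v₂))` consists of the joins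
`P(O₁,O₂)` (union of carriers, transitive closure of the union of orders)
that exist as strict posets. -/
def g [DecidableEq α] : DAT α → Set (Attack α)
  | .bas a => {O | O.carrier = {a} ∧ ∀ x y, ¬ O.lt x y}
  | .or [v₁, v₂] => g v₁ ∪ g v₂
  | .and [v₁, v₂] => {O | ∃ O₁ ∈ g v₁, ∃ O₂ ∈ g v₂,
      O.carrier = O₁.carrier ∪ O₂.carrier ∧
      ∀ x y, O.lt x y ↔ Relation.TransGen (fun p q => O₁.lt p q ∨ O₂.lt p q) x y}
  | _ => ∅
  decreasing_by all_goals (simp_wf; omega)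

end DAT

section Aux

variable {α : Type}

lemma Attack.ext' {O O' : Attack α} (hc : O.carrier = O'.carrier)
    (hl : ∀ x y, O.lt x y ↔ O'.lt x y) : O = O' := by
  obtain ⟨c, l, m, i, t⟩ := O
  obtain ⟨c', l', m', i', t'⟩ := O'
  simp only at hc hl
  subst hc
  have hll : l = l' := funext₂ fun x y => propext (hl x y)
  subst hll
  rfl

lemma reaches_mono {A A' : Set α} {r r' : α → α → Prop} {v : DAT α}
    (hv : DAT.IsBinStatic v) (h : DAT.Reaches A r v) (hA : A ⊆ A')
    (hr : ∀ x y, r x y → r' x y) : DAT.Reaches A' r' v := by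
  induction hv with
  | bas a => cases h with | bas ha => exact .bas (hA ha)
  | @or v₁ v₂ h1 h2 ih1 ih2 =>
    cases h with
    | or hc hre =>
      rcases List.mem_pair.mp hc with rfl | rfl
      · exact .or (by simp) (ih1 hre)
      · exact .or (by simp) (ih2 hre)
  | @and v₁ v₂ h1 h2 ih1 ih2 =>
    cases h with
    | and hall =>
      refine .and ?_
      intro c hc
      rcases List.mem_pair.mp hc with rfl | rfl
      · exact ih1 (hall _ (by simp))
      · exact ih2 (hall _ (by simp))

lemma g_successful [DecidableEq α] {T : DAT α} (hT : DAT.IsBinStatic T) :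
    ∀ O ∈ DAT.g T, DAT.Successful O T := by
  induction hT with
  | bas a =>
    intro O hO
    rw [DAT.g] at hO
    exact .bas (by simp [hO.1])
  | @or v₁ v₂ h1 h2 ih1 ih2 =>
    intro O hO
    rw [DAT.g] at hO
    rcases hO with h | h
    · exact .or (by simp) (ih1 O h)
    · exact .or (by simp) (ih2 O h)
  | @and v₁ v₂ hv1 hv2 ih1 ih2 =>
    intro O hO
    rw [DAT.g] at hO
    obtain ⟨O₁, hg1, O₂, hg2, hc, hl⟩ := hO
    refine .and ?_
    intro c hc'
    have hsub1 : (↑O₁.carrier : Set α) ⊆ ↑O.carrier := by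
      rw [hc]; intro x hx; simp only [Finset.coe_union, Set.mem_union]; exact Or.inl hx
    have hsub2 : (↑O₂.carrier : Set α) ⊆ ↑O.carrier := by
      rw [hc]; intro x hx; simp only [Finset.coe_union, Set.mem_union]; exact Or.inr hx
    rcases List.mem_pair.mp hc' with rfl | rfl
    · exact reaches_mono hv1 (ih1 O₁ hg1) hsub1
        (fun x y h => (hl x y).mpr (.single (Or.inl h)))
    · exact reaches_mono hv2 (ih2 O₂ hg2) hsub2
        (fun x y h => (hl x y).mpr (.single (Or.inr h)))

lemma exists_g_le [DecidableEq α] {T : DAT α} (hT : DAT.IsBinStatic T)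
    {O : Attack α} (hO : DAT.Successful O T) :
    ∃ O' ∈ DAT.g T, Attack.le O' O := by
  induction hT with
  | bas a =>
    cases hO with
    | bas ha =>
      refine ⟨⟨{a}, fun _ _ => False, fun h => h.elim, fun _ h => h, fun h _ => h.elim⟩,
        ?_, ?_⟩
      · rw [DAT.g]; exact ⟨rfl, fun _ _ h => h⟩
      · exact ⟨Finset.singleton_subset_iff.mpr (by exact_mod_cast ha),
          fun _ _ h => h.elim⟩
  | @or v₁ v₂ h1 h2 ih1 ih2 =>
    cases hO with
    | or hc hre =>
      rcases List.mem_pair.mp hc with rfl | rfl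
      · obtain ⟨O', hg, hle⟩ := ih1 hre
        exact ⟨O', by rw [DAT.g]; exact Or.inl hg, hle⟩
      · obtain ⟨O', hg, hle⟩ := ih2 hre
        exact ⟨O', by rw [DAT.g]; exact Or.inr hg, hle⟩
  | @and v₁ v₂ h1 h2 ih1 ih2 =>
    cases hO with
    | and hall =>
      obtain ⟨O₁, hg1, hle1⟩ := ih1 (hall _ (by simp))
      obtain ⟨O₂, hg2, hle2⟩ := ih2 (hall _ (by simp))
      have hsub : ∀ x y, Relation.TransGen (fun p q => O₁.lt p q ∨ O₂.lt p q) x y →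
          O.lt x y := by
        intro x y h
        induction h with
        | single h => exact h.elim (hle1.2 _ _) (hle2.2 _ _)
        | tail _ h ih => exact O.lt_trans ih (h.elim (hle1.2 _ _) (hle2.2 _ _))
      refine ⟨⟨O₁.carrier ∪ O₂.carrier,
        Relation.TransGen (fun p q => O₁.lt p q ∨ O₂.lt p q), ?_,
        fun x h => O.lt_irrefl x (hsub x x h), fun h h' => h.trans h'⟩, ?_, ?_⟩
      · intro a b h
        induction h with
        | single h =>
          rcases h with h | h
          · exact ⟨Finset.mem_union_left _ (O₁.lt_mem h).1,
              Finset.mem_union_left _ (O₁.lt_mem h).2⟩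
          · exact ⟨Finset.mem_union_right _ (O₂.lt_mem h).1,
              Finset.mem_union_right _ (O₂.lt_mem h).2⟩
        | tail _ h ih =>
          refine ⟨ih.1, ?_⟩
          rcases h with h | h
          · exact Finset.mem_union_left _ (O₁.lt_mem h).2
          · exact Finset.mem_union_right _ (O₂.lt_mem h).2
      · rw [DAT.g]
        exact ⟨O₁, hg1, O₂, hg2, rfl, fun _ _ => Iff.rfl⟩
      · exact ⟨Finset.union_subset hle1.1 hle2.1, hsub⟩

end Aux

/-- for a binary static attack tree, `g(R_T)` is a set of
successful attacks containing all minimal successful attacks. -/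
theorem stmt18 {α : Type} [DecidableEq α] (T : DAT α) (hT : DAT.IsBinStatic T) :
    (∀ O ∈ DAT.g T, DAT.Successful O T) ∧
    ∀ O : Attack α, DAT.Successful O T →
      (∀ O' : Attack α, DAT.Successful O' T → O'.le O → O.le O') →
      O ∈ DAT.g T := by
  refine ⟨g_successful hT, ?_⟩
  intro O hO hmin
  obtain ⟨O', hO'g, hle⟩ := exists_g_le hT hO
  have hge := hmin O' (g_successful hT O' hO'g) hle
  have heq : O = O' := Attack.ext' (Finset.Subset.antisymm hge.1 hle.1)
    (fun x y => ⟨hge.2 x y, hle.2 x y⟩)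
  rw [heq]; exact hO'g
end
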